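/- arXiv:0801.1418 — 3 statements merged into one kernel-verified Lean document; each statement's English description precedes it below -/
import Mathlib

section
/- Let k be an algebraically closed field of characteristic p > 0 and let g be a nonzero rational function in k(z) with g(x) = 1 at a point x of the projective line. If ω = dg/g has a zero at x, then ord_x(ω) + 1 is not divisible by p. -/
open PowerSeries

/-! Since `g` is a unit, `dg = ω g` has the same order `n` as `ω`. But the `n`-th coefficient
of `dg` is `(n + 1) g_{n+1}`, which vanishes in characteristic `p` when `p ∣ n + 1`. -/

namespace PowerSeries

variable {R : Type*} [CommSemiring R] (p : ℕ) [CharP R p]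

theorem coeff_derivative_eq_zero_of_dvd (f : R⟦X⟧) {n : ℕ} (h : p ∣ n + 1) :
    coeff n (d⁄dX R f) = 0 := by
  rw [coeff_derivative, ← Nat.cast_add_one, (CharP.cast_eq_zero_iff R p _).mpr h, mul_zero]

theorem not_dvd_order_derivative_add_one (f : R⟦X⟧) {n : ℕ} (hn : (d⁄dX R f).order = n) :
    ¬ p ∣ n + 1 :=
  fun h ↦ (order_eq_nat.mp hn).1 (coeff_derivative_eq_zero_of_dvd p f h)

end PowerSeries

theorem stmt0_general (k : Type*) [Field k] (p : ℕ) [CharP k p]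
    (g : PowerSeries k) (hg1 : PowerSeries.constantCoeff (R := k) g = 1)
    (ω : PowerSeries k) (hω : ω * g = PowerSeries.derivative k g)
    (n : ℕ) (hn : ω.order = n) :
    ¬ p ∣ (n + 1) := by
  have hg_unit : IsUnit g := isUnit_iff_constantCoeff.mpr (by simp [hg1])
  apply not_dvd_order_derivative_add_one p g
  rw [← hω, order_mul, hn, order_zero_of_unit hg_unit, add_zero]

/-- Let `k` be an algebraically closed field of characteristic `p > 0` and let
`g` be invertible near the point `x` with `g(x) = 1` (written as a power series in a local
coordinate at `x`). If `ω = dg/g` has a zero at `x` of order `n ≥ 1`, then `n + 1` (the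
conductor `ord_x(ω) + 1`) is not divisible by `p`. -/
theorem stmt0 (k : Type*) [Field k] [IsAlgClosed k] (p : ℕ) [CharP k p] (hp : 0 < p)
    (g : PowerSeries k) (hg1 : PowerSeries.constantCoeff (R := k) g = 1)
    (ω : PowerSeries k) (hω : ω * g = PowerSeries.derivative k g)
    (n : ℕ) (hn : ω.order = n) (hzero : 1 ≤ n) :
    ¬ p ∣ (n + 1) :=
  stmt0_general k p g hg1 ω hω n hn
end

section
/- Let A = (A_1, …, A_r) ∈ Z^r with r ≥ 2, all A_i nonzero, and Σ_i A_i = 0. Set n_A = Σ_i max(A_i, 0) and k_A = gcd(A_1, …, A_r). If there exists a bicolored plane tree with positive integer edge weights whose valency list is A (black vertices have valencies the positive A_i, white vertices have valencies the negatives of the negative A_i, and the valency of a vertex is the sum of the weights of its adjacent edges), then k_A divides the weight of every edge of the tree. -/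
/-!
Removing the edge `ij` from the tree splits the vertices into the component `S` of `i` and its
complement. Orient every edge from black to white and let `f v u = sign (A v) * w v u`, an
antisymmetric flow. Summing the valencies `A v = ∑ u, f v u` over `S`, the edges inside `S`
cancel and only the bridge `ij` survives, so `∑ v ∈ S, A v = ± w i j`, which is divisible by
`gcd A`.
-/

namespace Finset

variable {α : Type*}

theorem sum_sum_eq_zero_of_antisymm {f : α → α → ℤ} (hf : ∀ a b, f a b = -f b a)
    (s : Finset α) : ∑ a ∈ s, ∑ b ∈ s, f a b = 0 := by
  have hneg : ∑ a ∈ s, ∑ b ∈ s, f a b = -∑ a ∈ s, ∑ b ∈ s, f a b := by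
    conv_lhs => rw [sum_comm]
    simp only [← sum_neg_distrib]
    exact sum_congr rfl fun b _ ↦ sum_congr rfl fun a _ ↦ hf a b
  omega

theorem sum_sum_eq_sum_sum_compl_of_antisymm [Fintype α] [DecidableEq α] {f : α → α → ℤ}
    (hf : ∀ a b, f a b = -f b a) (s : Finset α) :
    ∑ a ∈ s, ∑ b, f a b = ∑ a ∈ s, ∑ b ∈ sᶜ, f a b := by
  simp only [← sum_add_sum_compl s (f _), sum_add_distrib,
    sum_sum_eq_zero_of_antisymm hf, zero_add]

theorem sum_sum_eq_single_of_mem {M : Type*} [AddCommMonoid M] {s t : Finset α}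
    {f : α → α → M} {i j : α} (hi : i ∈ s) (hj : j ∈ t)
    (hf : ∀ a ∈ s, ∀ b ∈ t, f a b ≠ 0 → a = i ∧ b = j) :
    ∑ a ∈ s, ∑ b ∈ t, f a b = f i j := by
  rw [sum_eq_single_of_mem i hi, sum_eq_single_of_mem j hj]
  · exact fun b hb hbj ↦ by_contra fun h ↦ hbj (hf i hi b hb h).2
  · exact fun a ha hai ↦ sum_eq_zero fun b hb ↦
      by_contra fun h ↦ hai (hf a ha b hb h).1

end Finset

namespace SimpleGraph

variable {V : Type*} {G : SimpleGraph V} {i j u v : V}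

theorem IsAcyclic.not_reachable_deleteEdges (hG : G.IsAcyclic) (hij : G.Adj i j) :
    ¬ (G.deleteEdges {s(i, j)}).Reachable i j :=
  isBridge_iff.mp (isAcyclic_iff_forall_adj_isBridge.mp hG hij)

theorem IsAcyclic.eq_of_adj_of_reachable_deleteEdges (hG : G.IsAcyclic) (hij : G.Adj i j)
    (hv : (G.deleteEdges {s(i, j)}).Reachable i v)
    (hu : ¬ (G.deleteEdges {s(i, j)}).Reachable i u) (hvu : G.Adj v u) : v = i ∧ u = j := by
  by_cases he : s(v, u) = s(i, j)
  · rcases Sym2.eq_iff.mp he with ⟨rfl, rfl⟩ | ⟨rfl, rfl⟩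
    · exact ⟨rfl, rfl⟩
    · exact absurd hv (hG.not_reachable_deleteEdges hij)
  · exact absurd (hv.trans (deleteEdges_adj.mpr ⟨hvu, he⟩).reachable) hu

end SimpleGraph

open Finset in
theorem stmt5_general (r : ℕ) (A : Fin r → ℤ)
    (G : SimpleGraph (Fin r)) (hT : G.IsTree)
    (hbicol : ∀ i j, G.Adj i j → (0 < A i ∧ A j < 0) ∨ (A i < 0 ∧ 0 < A j))
    (w : Fin r → Fin r → ℕ) (hsymm : ∀ i j, w i j = w j i)
    (hzero : ∀ i j, ¬ G.Adj i j → w i j = 0)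
    (hval : ∀ i, ∑ j, w i j = (A i).natAbs) :
    ∀ i j, G.Adj i j → (Finset.univ.gcd A : ℤ) ∣ (w i j : ℤ) := by
  classical
  intro i j hij
  set f : Fin r → Fin r → ℤ := fun v u ↦ (A v).sign * w v u
  have hf : ∀ v u, f v u = -f u v := fun v u ↦ by
    by_cases hvu : G.Adj v u
    · rcases hbicol v u hvu with ⟨hv, hu⟩ | ⟨hv, hu⟩ <;>
        simp only [f, Int.sign_eq_one_of_pos, Int.sign_eq_neg_one_of_neg, hv, hu, hsymm u v] <;>
        ring
    · simp [f, hzero v u hvu, hzero u v (fun h ↦ hvu h.symm)]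
  set S := univ.filter ((G.deleteEdges {s(i, j)}).Reachable i)
  have hcut : ∑ v ∈ S, A v = f i j := by
    calc ∑ v ∈ S, A v = ∑ v ∈ S, ∑ u, f v u := by
          refine sum_congr rfl fun v _ ↦ ?_
          rw [← Finset.mul_sum, ← Nat.cast_sum, hval, Int.sign_mul_natAbs]
      _ = ∑ v ∈ S, ∑ u ∈ Sᶜ, f v u := sum_sum_eq_sum_sum_compl_of_antisymm hf S
      _ = f i j := by
        refine sum_sum_eq_single_of_mem (by simp [S])
          (by simpa [S] using hT.isAcyclic.not_reachable_deleteEdges hij) fun v hv u hu hvu ↦ ?_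
        refine hT.isAcyclic.eq_of_adj_of_reachable_deleteEdges hij (by simpa [S] using hv)
          (by simpa [S] using hu) (by_contra fun h ↦ hvu ?_)
        simp [f, hzero v u h]
  have hAi : A i ≠ 0 := by rcases hbicol i j hij with h | h <;> omega
  rw [← (Int.isUnit_iff_natAbs_eq.mpr (Int.natAbs_sign_of_ne_zero hAi)).dvd_mul_left]
  change _ ∣ f i j
  rw [← hcut]
  exact dvd_sum fun v _ ↦ gcd_dvd (mem_univ v)

/-- Let `A = (A 1, …, A r) ∈ ℤ^r`, `r ≥ 2`, with all `A i` nonzero and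
`∑ i, A i = 0`, and let `k_A = gcd (A 1, …, A r)`.  Suppose `T` is a bicolored tree with
vertex set `Fin r` (vertex `i` is black if `A i > 0` and white if `A i < 0`, and every edge
joins a black and a white vertex) equipped with positive integer edge weights `w`, whose
valency list is `A`: the sum of the weights of the edges at vertex `i` is `|A i|`.
Then `k_A` divides the weight of every edge of `T`. -/
theorem stmt5 (r : ℕ) (hr : 2 ≤ r) (A : Fin r → ℤ) (hA0 : ∀ i, A i ≠ 0)
    (hsum : ∑ i, A i = 0)
    (G : SimpleGraph (Fin r)) (hT : G.IsTree)
    (hbicol : ∀ i j, G.Adj i j → (0 < A i ∧ A j < 0) ∨ (A i < 0 ∧ 0 < A j))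
    (w : Fin r → Fin r → ℕ) (hsymm : ∀ i j, w i j = w j i)
    (hpos : ∀ i j, G.Adj i j → 0 < w i j) (hzero : ∀ i j, ¬ G.Adj i j → w i j = 0)
    (hval : ∀ i, ∑ j, w i j = (A i).natAbs) :
    ∀ i j, G.Adj i j → (Finset.univ.gcd A : ℤ) ∣ (w i j : ℤ) :=
  stmt5_general r A G hT hbicol w hsymm hzero hval
end

section
/- Let A = (A_1, …, A_r) ∈ Z^r with Σ_i A_i = 0 and all A_i nonzero, and suppose gcd(A_1, …, A_r) = 1, with A_1, …, A_s > 0 and A_{s+1}, …, A_r < 0 for some 1 ≤ s < r. For i = s+1, …, r define m_i = gcd(A_2, …, A_i + A_1, …, A_r) (the gcd of all entries except A_1, with A_i replaced by A_i + A_1). Then the integers m_{s+1}, …, m_r are pairwise coprime. -/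
/-! A common divisor `d` of `m_i` and `m_j` divides every `A_k` with `k ≠ 1`: for `k ≠ i` this is
read off the tuple defining `m_i`, and for `k = i` off the tuple defining `m_j`. It also divides
`A_i + A_1`, hence `A_1`, so `d` divides `gcd(A_1, …, A_r) = 1`. -/

section ShiftedGcd

variable {ι R : Type*} [DecidableEq ι] [CommRing R] [NormalizedGCDMonoid R]

lemma dvd_gcd_of_dvd_gcd_shifted {s : Finset ι} {A : ι → R} {z i j : ι} {d : R}
    (hi : i ∈ s.erase z) (hij : i ≠ j)
    (hdi : d ∣ (s.erase z).gcd (fun k => if k = i then A k + A z else A k))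
    (hdj : d ∣ (s.erase z).gcd (fun k => if k = j then A k + A z else A k)) :
    d ∣ s.gcd A := by
  have hAi : d ∣ A i := by simpa [hij] using hdj.trans (Finset.gcd_dvd hi)
  have hAz : d ∣ A z := by
    have hAiz : d ∣ A i + A z := by simpa using hdi.trans (Finset.gcd_dvd hi)
    simpa using hAiz.sub hAi
  refine Finset.dvd_gcd fun k hk => ?_
  by_cases hkz : k = z
  · exact hkz ▸ hAz
  by_cases hki : k = i
  · exact hki ▸ hAi
  simpa [hki] using hdi.trans (Finset.gcd_dvd (Finset.mem_erase.2 ⟨hkz, hk⟩))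

theorem isRelPrime_gcd_shifted {s : Finset ι} {A : ι → R} {z i j : ι}
    (hgcd : s.gcd A = 1) (hi : i ∈ s.erase z) (hij : i ≠ j) :
    IsRelPrime ((s.erase z).gcd (fun k => if k = i then A k + A z else A k))
      ((s.erase z).gcd (fun k => if k = j then A k + A z else A k)) := fun _ hdi hdj =>
  isUnit_of_dvd_one (hgcd ▸ dvd_gcd_of_dvd_gcd_shifted hi hij hdi hdj)

end ShiftedGcd

/-- Let `A 0, …, A (r-1)` be nonzero integers with sum `0` and overall gcd `1`,
with `A i > 0` for `i < s` and `A i < 0` for `s ≤ i` (`1 ≤ s < r`).  For each `i` with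
`s ≤ i` let `m i` be the gcd of the `(r-1)`-tuple obtained from `A` by deleting the entry
`A 0` and replacing `A i` by `A i + A 0`.  Then the `m i`, for `s ≤ i`, are pairwise
coprime. -/
theorem stmt6 (r s : ℕ) (hs : 1 ≤ s) (hsr : s < r) (A : Fin r → ℤ)
    (hgcd : Finset.univ.gcd A = 1)
    (M : Fin r → ℤ)
    (hM : ∀ i, M i = (Finset.univ.erase (⟨0, by omega⟩ : Fin r)).gcd
        (fun j => if j = i then A j + A ⟨0, by omega⟩ else A j)) :
    ∀ i j : Fin r, s ≤ (i : ℕ) → s ≤ (j : ℕ) → i ≠ j → IsCoprime (M i) (M j) := by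
  intro i j hi _ hij
  have hi_mem : i ∈ Finset.univ.erase ⟨0, by omega⟩ :=
    Finset.mem_erase.2 ⟨Fin.ne_of_val_ne (show (i : ℕ) ≠ 0 by omega), Finset.mem_univ i⟩
  rw [hM i, hM j]
  exact (isRelPrime_gcd_shifted hgcd hi_mem hij).isCoprime
end
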